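/- The Choi map φ_{C₁} : M_3(ℂ) → M_3(ℂ), defined by φ_{C₁}((x_{ij})) = (1/2)·[[x₁₁+x₂₂, −x₁₂, −x₁₃], [−x₂₁, x₂₂+x₃₃, −x₂₃], [−x₃₁, −x₃₂, x₃₃+x₁₁]], is a positive linear map. -/

import Mathlib

open Matrix ComplexOrder

/-!
Every positive semidefinite `X` is a sum of rank-one matrices `w wᴴ`, so by linearity it suffices
to treat `X = w wᴴ`. There the quadratic form of `φ(w wᴴ)` at `v` is
`½ (∑ᵢ (2|wᵢ|² + |wᵢ₊₁|²) |vᵢ|² - |⟨v, w⟩|²)` (indices mod 3), and after the triangle inequality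
`|⟨v, w⟩| ≤ ∑ᵢ |vᵢ| |wᵢ|` its nonnegativity is a degree-four polynomial inequality in six reals.
-/

/-- The Choi map `φ_{C₁}` on `M₃(ℂ)`. -/
noncomputable def choi1 (x : Matrix (Fin 3) (Fin 3) ℂ) : Matrix (Fin 3) (Fin 3) ℂ :=
  (1 / 2 : ℂ) •
    !![x 0 0 + x 1 1, -x 0 1, -x 0 2;
       -x 1 0, x 1 1 + x 2 2, -x 1 2;
       -x 2 0, -x 2 1, x 2 2 + x 0 0]

theorem choi1_isLinearMap : IsLinearMap ℂ choi1 where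
  map_add X Y := by
    ext i j
    fin_cases i <;> fin_cases j <;> simp [choi1] <;> ring
  map_smul c X := by
    ext i j
    fin_cases i <;> fin_cases j <;> simp [choi1] <;> ring

theorem isHermitian_choi1 {X : Matrix (Fin 3) (Fin 3) ℂ} (hX : X.IsHermitian) :
    (choi1 X).IsHermitian := by
  ext i j
  fin_cases i <;> fin_cases j <;> simp [choi1, hX.apply]

theorem choi_inequality (a b : Fin 3 → ℝ) :
    (∑ i, a i * b i) ^ 2 ≤ ∑ i, (2 * b i ^ 2 + b (i + 1) ^ 2) * a i ^ 2 := by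
  simp only [Fin.sum_univ_three, Fin.reduceAdd]
  nlinarith [sq_nonneg (a 0 * b 0 - a 1 * b 1), sq_nonneg (a 1 * b 1 - a 2 * b 2),
    sq_nonneg (a 0 * b 0 - a 2 * b 2), sq_nonneg (a 0 * b 1 - a 1 * b 0),
    sq_nonneg (a 1 * b 2 - a 2 * b 1), sq_nonneg (a 2 * b 0 - a 0 * b 2),
    sq_nonneg (a 0 * b 1 - a 1 * b 1), sq_nonneg (a 1 * b 2 - a 2 * b 2),
    sq_nonneg (a 2 * b 0 - a 0 * b 0)]

theorem star_dotProduct_choi1_vecMulVec_mulVec (w v : Fin 3 → ℂ) :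
    star v ⬝ᵥ (choi1 (vecMulVec w (star w)) *ᵥ v) =
      ((1 / 2 * (∑ i, (2 * ‖w i‖ ^ 2 + ‖w (i + 1)‖ ^ 2) * ‖v i‖ ^ 2 - ‖star v ⬝ᵥ w‖ ^ 2) : ℝ) :
        ℂ) := by
  push_cast
  simp only [← Complex.mul_conj']
  simp only [choi1, dotProduct, mulVec, vecMulVec_apply, Fin.sum_univ_three, Matrix.smul_apply,
    of_apply, cons_val, Fin.reduceAdd, Pi.star_apply, RCLike.star_def, map_add, map_mul,
    Complex.conj_conj, smul_eq_mul]
  ring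

theorem posSemidef_choi1_vecMulVec (w : Fin 3 → ℂ) :
    (choi1 (vecMulVec w (star w))).PosSemidef := by
  refine .of_dotProduct_mulVec_nonneg
    (isHermitian_choi1 (posSemidef_vecMulVec_self_star w).isHermitian) fun v => ?_
  have hdot : ‖star v ⬝ᵥ w‖ ≤ ∑ i, ‖v i‖ * ‖w i‖ := by
    refine (norm_sum_le _ _).trans_eq ?_
    simp
  have hchoi := choi_inequality (fun i => ‖v i‖) (fun i => ‖w i‖)
  rw [star_dotProduct_choi1_vecMulVec_mulVec, Complex.zero_le_real]
  linarith [pow_le_pow_left₀ (norm_nonneg _) hdot 2]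

theorem choi1_positive_linear :
    IsLinearMap ℂ choi1 ∧
      ∀ X : Matrix (Fin 3) (Fin 3) ℂ, X.PosSemidef → (choi1 X).PosSemidef := by
  refine ⟨choi1_isLinearMap, fun X hX => ?_⟩
  obtain ⟨m, w, rfl⟩ := posSemidef_iff_eq_sum_vecMulVec.mp hX
  rw [← IsLinearMap.mk'_apply choi1_isLinearMap, map_sum]
  exact posSemidef_sum _ fun k _ => posSemidef_choi1_vecMulVec (w k)
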